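/- Let R = ℝ[P₄,…,P_{2n-2}] and S = ℝ[u, P'₄,…,P'_{2n-6}] with φ : R → S[u^{-1}] defined by φ(P_{2n-2}) = u²P'_{2n-6}, φ(P_j) = u²P'_{j-4} + P'_j for 4 ≤ j ≤ 2n−6 (with P'₀ := 1). Then φ is injective. -/

import Mathlib

/-!
STATEMENT 15: Let `R = ℝ[P₄, …, P_{2n-2}]` and `S = ℝ[u, P'₄, …, P'_{2n-6}]` with
`φ : R → S[u⁻¹]` defined by `φ(P_{2n-2}) = u²·P'_{2n-6}` and `φ(P_j) = u²·P'_{j-4} + P'_j` for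
`4 ≤ j ≤ 2n-6` (with `P'₀ := 1`).  Then `φ` is injective.

This is the odd-`n` analogue of the restriction map
`H(BSO(n)) → H(B(SO(2)×SO(n-2)))[u⁻¹]`, `deg u = 2` being the Euler class of `SO(2)`.
We write `m` for the number of generators of the source (`P₄, …, P_{4m}` with `4m = 2n - 2`),
so the source is the polynomial ring on `Fin m` (`i ↦ P_{4(i+1)}`), and `S[u⁻¹]` is the ring of
Laurent polynomials in `u` over the polynomial ring on `Fin (m-1)` (`i ↦ P'_{4(i+1)}`); `u = T 1`
and `u² = T 2` in Laurent polynomial notation.  We assume `m ≥ 2` (i.e. `n ≥ 5`, so that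
`P'_{2n-6}` exists, as in the statement).
-/

open MvPolynomial LaurentPolynomial

/-- The restriction map `H(BSO(n)) → H(B(SO(2)×SO(n-2)))[u⁻¹]` for `n` odd. -/
noncomputable def oddRestriction (m : ℕ) (hm : 2 ≤ m) :
    MvPolynomial (Fin m) ℝ →ₐ[ℝ]
      LaurentPolynomial (MvPolynomial (Fin (m - 1)) ℝ) :=
  MvPolynomial.aeval (fun i : Fin m =>
    if h : (i : ℕ) = m - 1 then
      -- top class: P_{2n-2} ↦ u²·P'_{2n-6}
      T 2 * LaurentPolynomial.C (X (⟨m - 2, by omega⟩ : Fin (m - 1)))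
    else
      -- P_{4(i+1)} ↦ u²·P'_{4i} + P'_{4(i+1)}, with P'₀ = 1
      T 2 * (if h0 : (i : ℕ) = 0 then 1
             else LaurentPolynomial.C
               (X (⟨(i : ℕ) - 1, by have := i.isLt; omega⟩ : Fin (m - 1)))) +
        LaurentPolynomial.C (X (⟨(i : ℕ), by have := i.isLt; omega⟩ : Fin (m - 1))))

/-
After evaluating at `u = t` and `P' = y`, `φ` becomes the map sending `(s, y) = (t², y)` to the
coefficients of `(1 + s x)(1 + y₁ x + ⋯ + y_{m-1} x^{m-1})`, the Whitney formula for total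
Pontryagin classes. Over `ℂ` every `1 + a₁ x + ⋯ + a_m x^m` with `a_m ≠ 0` has a linear factor
`1 + s x` with `s ≠ 0` (a root), and `s` has a square root, so a polynomial killed by `φ` vanishes
wherever `a_m ≠ 0`; hence `a_m · p` vanishes on all of `ℂ^m`, and `p = 0`.
-/

namespace Polynomial

theorem coeff_one_add_C_mul_X_mul_succ {R : Type*} [Semiring R] (s : R) (B : R[X]) (k : ℕ) :
    ((1 + C s * X) * B).coeff (k + 1) = s * B.coeff k + B.coeff (k + 1) := by
  rw [add_mul, one_mul, coeff_add, mul_assoc, coeff_C_mul, coeff_X_mul, add_comm]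

variable {K : Type*} [Field K] [IsAlgClosed K]

theorem exists_eq_one_add_C_mul_X_mul {A : K[X]} (hA0 : A.coeff 0 = 1) (hA : 0 < A.natDegree) :
    ∃ s ≠ 0, ∃ B : K[X], B.coeff 0 = 1 ∧ B.natDegree < A.natDegree ∧ A = (1 + C s * X) * B := by
  obtain ⟨r, hr⟩ := IsAlgClosed.exists_root A (natDegree_pos_iff_degree_pos.mp hA).ne'
  have hr0 : r ≠ 0 := by
    rintro rfl
    rw [IsRoot, ← coeff_zero_eq_eval_zero, hA0] at hr
    exact one_ne_zero hr
  set Q := A /ₘ (X - C r)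
  have hQ : (X - C r) * Q = A := mul_divByMonic_eq_iff_isRoot.mpr hr
  have hinv : C r⁻¹ * C r = (1 : K[X]) := by rw [← C_mul, inv_mul_cancel₀ hr0, C_1]
  have hfac : A = (1 + C (-r⁻¹) * X) * (C (-r) * Q) := by
    rw [← hQ, C_neg, C_neg]
    linear_combination (-(X * Q)) * hinv
  refine ⟨-r⁻¹, by simpa using hr0, C (-r) * Q, ?_, ?_, hfac⟩
  · simpa [hA0, mul_coeff_zero] using (congr_arg (coeff · 0) hfac).symm
  · calc (C (-r) * Q).natDegree ≤ Q.natDegree := natDegree_C_mul_le _ _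
      _ = A.natDegree - 1 := by rw [natDegree_divByMonic _ (monic_X_sub_C r), natDegree_X_sub_C]
      _ < A.natDegree := by omega

theorem exists_coeff_one_add_C_mul_X_mul {n : ℕ} (a : Fin (n + 1) → K)
    (ha : a (Fin.last n) ≠ 0) :
    ∃ s ≠ 0, ∃ B : K[X], B.coeff 0 = 1 ∧ B.coeff (n + 1) = 0 ∧
      ∀ i : Fin (n + 1), s * B.coeff i + B.coeff (i + 1) = a i := by
  classical
  set A : K[X] := 1 + X * ofFn (n + 1) a
  have hA_succ (i : Fin (n + 1)) : A.coeff (i + 1) = a i := by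
    simp [A, coeff_one, coeff_X_mul, i.isLt]
  have hA_deg : A.natDegree ≤ n + 1 := by
    refine (natDegree_add_le _ _).trans (max_le (by simp) ?_)
    have := ofFn_natDegree_lt (by omega : 1 ≤ n + 1) a
    calc (X * ofFn (n + 1) a).natDegree ≤ 1 + (ofFn (n + 1) a).natDegree := by
          simpa using natDegree_mul_le (p := X) (q := ofFn (n + 1) a)
      _ ≤ n + 1 := by omega
  have hA_pos : 0 < A.natDegree :=
    n.succ_pos.trans_le (le_natDegree_of_ne_zero (by rwa [← hA_succ] at ha))
  obtain ⟨s, hs, B, hB0, hBdeg, hAB⟩ := exists_eq_one_add_C_mul_X_mul (A := A) (by simp [A]) hA_pos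
  refine ⟨s, hs, B, hB0, coeff_eq_zero_of_natDegree_lt (by omega), fun i => ?_⟩
  rw [← hA_succ, hAB, coeff_one_add_C_mul_X_mul_succ]

end Polynomial

namespace MvPolynomial

theorem eq_zero_of_aeval_eq_zero_of_ne_zero {R K σ : Type*} [CommRing R] [IsDomain R] [Field K]
    [Infinite K] [Algebra R K] [FaithfulSMul R K] {p : MvPolynomial σ R} (i : σ)
    (h : ∀ a : σ → K, a i ≠ 0 → aeval a p = 0) : p = 0 := by
  have hXp : X i * p = 0 := by
    refine map_injective (algebraMap R K) (FaithfulSMul.algebraMap_injective R K)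
      (MvPolynomial.funext fun a => ?_)
    rw [map_mul, map_X, eval_mul, eval_X, eval_map, ← aeval_def, map_zero, map_zero]
    by_cases hai : a i = 0
    · rw [hai, zero_mul]
    · rw [h a hai, mul_zero]
  exact (mul_eq_zero.mp hXp).resolve_left (X_ne_zero i)

end MvPolynomial

theorem eval₂_oddRestriction {K : Type*} [CommSemiring K] [Algebra ℝ K] (m : ℕ) (hm : 2 ≤ m)
    (t : Kˣ) (Y : ℕ → K) (hY0 : Y 0 = 1) (hYm : Y m = 0) (p : MvPolynomial (Fin m) ℝ) :
    LaurentPolynomial.eval₂ (eval₂Hom (algebraMap ℝ K) fun j : Fin (m - 1) => Y (j + 1)) t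
        (oddRestriction m hm p) =
      aeval (fun i : Fin m => (t : K) ^ 2 * Y i + Y (i + 1)) p := by
  suffices h : (LaurentPolynomial.eval₂ _ t).comp (oddRestriction m hm).toRingHom =
      (aeval fun i : Fin m => (t : K) ^ 2 * Y i + Y (i + 1)).toRingHom from
    RingHom.congr_fun h p
  refine MvPolynomial.ringHom_ext (fun r => ?_) fun ⟨i, hi⟩ => ?_
  · simp [oddRestriction]
  · simp only [oddRestriction, RingHom.coe_comp, Function.comp_apply, AlgHom.toRingHom_eq_coe,
      RingHom.coe_coe, aeval_X]
    split_ifs with htop hbot <;>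
      simp only [map_add, map_mul, map_one, LaurentPolynomial.eval₂_T, LaurentPolynomial.eval₂_C,
        eval₂Hom_X', zpow_ofNat, Units.val_pow_eq_pow_val]
    · rw [show m - 2 + 1 = i by omega, show i + 1 = m by omega, hYm, add_zero]
    · rw [hbot, hY0]
    · rw [Nat.sub_add_cancel (Nat.pos_of_ne_zero hbot)]

theorem stmt_15 (m : ℕ) (hm : 2 ≤ m) : Function.Injective (oddRestriction m hm) := by
  obtain ⟨n, rfl⟩ : ∃ n, m = n + 1 := ⟨m - 1, by omega⟩
  refine (injective_iff_map_eq_zero _).2 fun p hp =>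
    MvPolynomial.eq_zero_of_aeval_eq_zero_of_ne_zero (K := ℂ) (Fin.last n) fun a ha => ?_
  obtain ⟨s, hs, B, hB0, hBn, hBa⟩ := Polynomial.exists_coeff_one_add_C_mul_X_mul a ha
  obtain ⟨t, rfl⟩ := IsAlgClosed.exists_pow_nat_eq s two_pos
  have ht : t ≠ 0 := by rintro rfl; simp at hs
  have h := eval₂_oddRestriction (n + 1) hm (Units.mk0 t ht) B.coeff hB0 hBn p
  rwa [hp, map_zero, Units.val_mk0, funext hBa, eq_comm] at h
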